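/- arXiv:1211.6216 — 3 statements merged into one kernel-verified Lean document; each statement's English description precedes it below -/
import Mathlib

section
/- For a fixed permutation, the vector of energies E_j = v_j · (W_j)^{(α−1)/α} · E / γ, where γ = ∑_{k=1}^n v_k (W_k)^{(α−1)/α}, is the unique minimizer of g(E_1,...,E_n) = ∑_{j=1}^n W_j · (v_j^α / E_j)^{1/(α−1)} subject to ∑_j E_j ≤ E and E_j > 0. -/
open Finset

private lemma bern_aux {β t : ℝ} (hβ : 0 < β) (ht : 0 < t) (ht1 : t ≠ 1) :
    1 - β * (t - 1) < t ^ (-β) := by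
  have h1 : (0:ℝ) < 1/t := by positivity
  have hs : (-1:ℝ) ≤ 1/t - 1 := by linarith
  have hs' : 1/t - 1 ≠ 0 := by
    intro h
    apply ht1
    have h2 : 1/t = 1 := by linarith
    field_simp at h2
    linarith
  have hp : (1:ℝ) < β + 1 := by linarith
  have hber := one_add_mul_self_lt_rpow_one_add hs hs' hp
  rw [show (1:ℝ) + (1/t - 1) = 1/t by ring] at hber
  have hmul := mul_lt_mul_of_pos_left hber ht
  have e2 : t * (1 + (β+1)*(1/t-1)) = 1 - β*(t-1) := by
    field_simp
    ring
  have e3 : t * (1/t)^(β+1) = t^(-β) := by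
    rw [one_div, Real.inv_rpow ht.le, ← Real.rpow_neg ht.le]
    calc t * t ^ (-(β+1)) = t ^ (1:ℝ) * t ^ (-(β+1)) := by rw [Real.rpow_one]
      _ = t ^ (1 + -(β+1)) := (Real.rpow_add ht _ _).symm
      _ = t ^ (-β) := by norm_num
  rw [e2, e3] at hmul
  exact hmul

private lemma tangent_lt {β x y : ℝ} (hβ : 0 < β) (hx : 0 < x) (hy : 0 < y)
    (hxy : x ≠ y) :
    y ^ (-β) - β * y ^ (-β - 1) * (x - y) < x ^ (-β) := by
  have ht : 0 < x/y := by positivity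
  have ht1 : x/y ≠ 1 := by
    intro h
    exact hxy (by field_simp at h; linarith)
  have hb := bern_aux hβ ht ht1
  have hyβ : 0 < y ^ (-β) := Real.rpow_pos_of_pos hy _
  have h2 := mul_lt_mul_of_pos_left hb hyβ
  have h3 : y ^ (-β - 1) = y ^ (-β) / y := by
    rw [Real.rpow_sub hy, Real.rpow_one]
  have eL : y^(-β) * (1 - β*(x/y - 1)) = y^(-β) - β * y^(-β-1)*(x-y) := by
    rw [h3]
    field_simp
  have eR : y^(-β) * (x/y)^(-β) = x^(-β) := by
    rw [Real.div_rpow hx.le hy.le]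
    field_simp
  rw [eL, eR] at h2
  exact h2

private lemma tangent_le {β x y : ℝ} (hβ : 0 < β) (hx : 0 < x) (hy : 0 < y) :
    y ^ (-β) - β * y ^ (-β - 1) * (x - y) ≤ x ^ (-β) := by
  by_cases h : x = y
  · subst h; simp
  · exact (tangent_lt hβ hx hy h).le

/-- the explicit energy assignment is the unique minimizer of the
convex program minimizing total weighted completion time under an energy budget. -/
theorem optimal_energy_assignment_unique
    (n : ℕ) (α E : ℝ) (hα : 1 < α) (hE : 0 < E)
    (v W : Fin n → ℝ) (hv : ∀ j, 0 < v j) (hW : ∀ j, 0 < W j)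
    (γ : ℝ) (hγ : γ = ∑ k, v k * (W k) ^ ((α - 1) / α))
    (g : (Fin n → ℝ) → ℝ)
    (hg : ∀ Evec, g Evec = ∑ j, W j * (v j ^ α / Evec j) ^ (1 / (α - 1)))
    (Eopt : Fin n → ℝ)
    (hEopt : ∀ j, Eopt j = v j * (W j) ^ ((α - 1) / α) * E / γ) :
    ((∑ j, Eopt j ≤ E) ∧ (∀ j, 0 < Eopt j)) ∧
      ∀ Evec : Fin n → ℝ, (∑ j, Evec j ≤ E) → (∀ j, 0 < Evec j) →
        g Eopt ≤ g Evec ∧ (g Evec = g Eopt → Evec = Eopt) := by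
  rcases Nat.eq_zero_or_pos n with h0 | hn
  · subst h0
    refine ⟨⟨by simpa using hE.le, fun j => j.elim0⟩,
      fun Evec h1 h2 => ⟨by simp [hg], fun _ => funext fun j => j.elim0⟩⟩
  -- main case
  have hα1 : (0:ℝ) < α - 1 := by linarith
  have hα0 : (0:ℝ) < α := by linarith
  set β : ℝ := 1/(α-1) with hβdef
  have hβ : 0 < β := by positivity
  set d : Fin n → ℝ := fun j => v j * W j ^ ((α-1)/α) with hd
  have hdpos : ∀ j, 0 < d j :=
    fun j => mul_pos (hv j) (Real.rpow_pos_of_pos (hW j) _)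
  have hne : (univ : Finset (Fin n)).Nonempty := by
    simpa [Finset.univ_nonempty_iff] using Fin.pos_iff_nonempty.mp hn
  have hγpos : 0 < γ := by
    rw [hγ]; exact Finset.sum_pos (fun j _ => hdpos j) hne
  have hγne : γ ≠ 0 := ne_of_gt hγpos
  have hEopt' : ∀ j, Eopt j = d j * (E/γ) := by
    intro j; rw [hEopt j, hd]; ring
  have hEoptpos : ∀ j, 0 < Eopt j := by
    intro j; rw [hEopt' j]; exact mul_pos (hdpos j) (by positivity)
  have hsumEopt : ∑ j, Eopt j = E := by
    simp only [hEopt']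
    rw [← Finset.sum_mul, ← hγ]
    field_simp
  set c : Fin n → ℝ := fun j => W j * (v j ^ α) ^ β with hc
  have hcpos : ∀ j, 0 < c j :=
    fun j => mul_pos (hW j) (Real.rpow_pos_of_pos (Real.rpow_pos_of_pos (hv j) _) _)
  have hgrw : ∀ (Evec : Fin n → ℝ), (∀ j, 0 < Evec j) →
      g Evec = ∑ j, c j * (Evec j)^(-β) := by
    intro Evec hpos
    rw [hg]
    refine Finset.sum_congr rfl fun j _ => ?_
    have hvα : (0:ℝ) < v j ^ α := Real.rpow_pos_of_pos (hv j) _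
    rw [Real.div_rpow hvα.le (hpos j).le, Real.rpow_neg (hpos j).le]
    try ring
  have hexp1 : α * β = β + 1 := by
    rw [hβdef]; field_simp
    try ring
  have hexp2 : ((α-1)/α) * (β+1) = 1 := by
    rw [hβdef]; field_simp
    try ring
  have hceq : ∀ j, c j = d j ^ (β+1) := by
    intro j
    have h1 : (v j ^ α) ^ β = v j ^ (β+1) := by
      rw [← Real.rpow_mul (hv j).le, hexp1]
    have h2 : d j ^ (β+1) = v j ^ (β+1) * W j := by
      rw [hd]
      simp only
      rw [Real.mul_rpow (hv j).le (Real.rpow_pos_of_pos (hW j) _).le,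
        ← Real.rpow_mul (hW j).le, hexp2, Real.rpow_one]
    show W j * (v j ^ α) ^ β = d j ^ (β + 1)
    rw [h1, h2]; ring
  set K : ℝ := (E/γ) ^ (-β-1) with hKdef
  have hK : 0 < K := Real.rpow_pos_of_pos (by positivity) _
  have hkey : ∀ j, c j * (Eopt j) ^ (-β-1) = K := by
    intro j
    rw [hEopt' j, Real.mul_rpow (hdpos j).le (by positivity : (0:ℝ) ≤ E/γ), hceq j]
    have : d j ^ (β+1) * d j ^ (-β-1) = 1 := by
      rw [← Real.rpow_add (hdpos j)]
      norm_num
    calc d j ^ (β+1) * (d j ^ (-β-1) * (E/γ) ^ (-β-1))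
        = (d j ^ (β+1) * d j ^ (-β-1)) * (E/γ) ^ (-β-1) := by ring
      _ = K := by rw [this, one_mul, hKdef]
  have term_le : ∀ (j : Fin n) (x : ℝ), 0 < x →
      c j * (Eopt j)^(-β) - β * K * (x - Eopt j) ≤ c j * x^(-β) := by
    intro j x hx
    have h := mul_le_mul_of_nonneg_left (tangent_le hβ hx (hEoptpos j)) (hcpos j).le
    have e : c j * ((Eopt j) ^ (-β) - β * (Eopt j) ^ (-β-1) * (x - Eopt j))
        = c j * (Eopt j)^(-β) - β * (c j * (Eopt j)^(-β-1)) * (x - Eopt j) := by ring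
    rw [e, hkey j] at h
    exact h
  have term_lt : ∀ (j : Fin n) (x : ℝ), 0 < x → x ≠ Eopt j →
      c j * (Eopt j)^(-β) - β * K * (x - Eopt j) < c j * x^(-β) := by
    intro j x hx hxy
    have h := mul_lt_mul_of_pos_left (tangent_lt hβ hx (hEoptpos j) hxy) (hcpos j)
    have e : c j * ((Eopt j) ^ (-β) - β * (Eopt j) ^ (-β-1) * (x - Eopt j))
        = c j * (Eopt j)^(-β) - β * (c j * (Eopt j)^(-β-1)) * (x - Eopt j) := by ring
    rw [e, hkey j] at h
    exact h
  refine ⟨⟨hsumEopt.le, hEoptpos⟩, fun Evec hsum hpos => ?_⟩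
  have hsum_eq : ∑ j, (c j * (Eopt j)^(-β) - β*K*(Evec j - Eopt j))
      = g Eopt + β*K*(E - ∑ j, Evec j) := by
    rw [Finset.sum_sub_distrib, ← Finset.mul_sum, Finset.sum_sub_distrib,
      hsumEopt, hgrw Eopt hEoptpos]
    ring
  have hslack : 0 ≤ β*K*(E - ∑ j, Evec j) :=
    mul_nonneg (mul_nonneg hβ.le hK.le) (by linarith)
  constructor
  · have hle : ∑ j, (c j * (Eopt j)^(-β) - β*K*(Evec j - Eopt j))
        ≤ ∑ j, c j * (Evec j)^(-β) :=
      Finset.sum_le_sum fun j _ => term_le j _ (hpos j)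
    rw [hsum_eq, ← hgrw Evec hpos] at hle
    linarith
  · intro heq
    by_contra hne2
    obtain ⟨j0, hj0⟩ := Function.ne_iff.mp hne2
    have hlt : ∑ j, (c j * (Eopt j)^(-β) - β*K*(Evec j - Eopt j))
        < ∑ j, c j * (Evec j)^(-β) :=
      Finset.sum_lt_sum (fun j _ => term_le j _ (hpos j))
        ⟨j0, Finset.mem_univ j0, term_lt j0 _ (hpos j0) hj0⟩
    rw [hsum_eq, ← hgrw Evec hpos] at hlt
    linarith
end

section
/- With the optimal energy assignment E_j = v_j (W_j)^{(α−1)/α} E/γ where γ = ∑_k v_k (W_k)^{(α−1)/α}, the total weighted completion time equals E^{−1/(α−1)} · (∑_{j=1}^n v_j (W_j)^{(α−1)/α})^{α/(α−1)}. -/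
open Finset

/-- under the optimal energy assignment, the total weighted completion
time equals E^{−1/(α−1)}·(∑_j v_j W_j^{(α−1)/α})^{α/(α−1)}. -/
theorem optimal_energy_scheduling_cost
    (n : ℕ) (hn : 0 < n) (α E : ℝ) (hα : 1 < α) (hE : 0 < E)
    (v W : Fin n → ℝ) (hv : ∀ j, 0 < v j) (hW : ∀ j, 0 < W j)
    (γ : ℝ) (hγ : γ = ∑ k, v k * (W k) ^ ((α - 1) / α))
    (Eopt : Fin n → ℝ)
    (hEopt : ∀ j, Eopt j = v j * (W j) ^ ((α - 1) / α) * E / γ) :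
    ∑ j, W j * (v j ^ α / Eopt j) ^ (1 / (α - 1)) =
      E ^ (-(1 / (α - 1))) * (∑ j, v j * (W j) ^ ((α - 1) / α)) ^ (α / (α - 1)) := by
  have hα1 : 0 < α - 1 := by linarith
  have hne : α - 1 ≠ 0 := ne_of_gt hα1
  have hα0 : (0:ℝ) < α := by linarith
  have hαne : α ≠ 0 := ne_of_gt hα0
  have hγpos : 0 < γ := by
    rw [hγ]
    apply Finset.sum_pos
    · intro k _
      exact mul_pos (hv k) (Real.rpow_pos_of_pos (hW k) _)
    · exact Finset.univ_nonempty_iff.mpr ⟨⟨0, hn⟩⟩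
  have key : ∀ j, W j * (v j ^ α / Eopt j) ^ (1 / (α - 1))
      = v j * (W j) ^ ((α - 1) / α) * (γ ^ (1 / (α - 1)) * E ^ (-(1 / (α - 1)))) := by
    intro j
    have hvj := hv j
    have hWj := hW j
    rw [hEopt j]
    have hbase : v j ^ α / (v j * W j ^ ((α - 1) / α) * E / γ)
        = v j ^ (α - 1) * W j ^ (-((α - 1) / α)) * (γ * E⁻¹) := by
      rw [Real.rpow_sub hvj, Real.rpow_neg hWj.le, Real.rpow_one]
      have hWp : (0:ℝ) < W j ^ ((α - 1) / α) := Real.rpow_pos_of_pos hWj _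
      field_simp
    have e1 : (v j ^ (α - 1)) ^ (1 / (α - 1)) = v j := by
      rw [← Real.rpow_mul hvj.le, mul_one_div, div_self hne, Real.rpow_one]
    have e2 : (W j ^ (-((α - 1) / α))) ^ (1 / (α - 1)) = W j ^ (-(1 / α)) := by
      rw [← Real.rpow_mul hWj.le]
      congr 1
      field_simp
    have e3 : W j * W j ^ (-(1 / α)) = W j ^ ((α - 1) / α) := by
      nth_rewrite 1 [← Real.rpow_one (W j)]
      rw [← Real.rpow_add hWj]
      congr 1
      field_simp
      ring
    rw [hbase, Real.mul_rpow (by positivity) (by positivity),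
        Real.mul_rpow (by positivity) (by positivity), e1, e2,
        Real.mul_rpow hγpos.le (by positivity), Real.inv_rpow hE.le,
        ← Real.rpow_neg hE.le, ← e3]
    ring
  have hsum : ∑ j, W j * (v j ^ α / Eopt j) ^ (1 / (α - 1))
      = γ * (γ ^ (1 / (α - 1)) * E ^ (-(1 / (α - 1)))) := by
    rw [Finset.sum_congr rfl (fun j _ => key j), ← Finset.sum_mul, ← hγ]
  have hγpow : γ ^ (α / (α - 1)) = γ * γ ^ (1 / (α - 1)) := by
    rw [show α / (α - 1) = 1 + 1 / (α - 1) by field_simp; ring, Real.rpow_add hγpos,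
      Real.rpow_one]
  rw [hsum, ← hγ, hγpow]
  ring
end

section
/- If an algorithm is a β-approximation for minimizing ∑_j w'_j (C_j)^{(α−1)/α} on a unit-speed machine, then the induced sequence gives a β^{α/(α−1)}-approximation for the energy-budgeted scheduling cost E^{−1/(α−1)} (∑_j v_{π(j)} (W^π_{π(j)})^{(α−1)/α})^{α/(α−1)}. -/
open Finset

/-- a β-approximation for 1||∑ w'_j C_j^{(α−1)/α} yields a
β^{α/(α−1)}-approximation for the energy-budgeted scheduling cost. -/
theorem beta_approx_transfers
    (n : ℕ) (α E β : ℝ) (hα : 1 < α) (hE : 0 < E) (hβ : 1 ≤ β)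
    (v w : Fin n → ℝ) (hv : ∀ j, 0 < v j) (hw : ∀ j, 0 < w j)
    (Z : Equiv.Perm (Fin n) → ℝ)
    (hZ : ∀ π, Z π = ∑ j, v (π j) *
      (∑ k ∈ Finset.univ.filter (fun k => j ≤ k), w (π k)) ^ ((α - 1) / α))
    (π : Equiv.Perm (Fin n))
    (happrox : ∀ σ, Z π ≤ β * Z σ) :
    ∀ σ, (Z π) ^ (α / (α - 1)) / E ^ (1 / (α - 1)) ≤
      β ^ (α / (α - 1)) * ((Z σ) ^ (α / (α - 1)) / E ^ (1 / (α - 1))) := by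
  intro σ
  have hZnn : ∀ τ : Equiv.Perm (Fin n), 0 ≤ Z τ := by
    intro τ
    rw [hZ]
    refine Finset.sum_nonneg fun j _ => mul_nonneg (hv _).le (Real.rpow_nonneg ?_ _)
    exact Finset.sum_nonneg fun k _ => (hw _).le
  have hα1 : 0 < α - 1 := by linarith
  have hp : 0 ≤ α / (α - 1) := by positivity
  have h1 : (Z π) ^ (α / (α - 1)) ≤ (β * Z σ) ^ (α / (α - 1)) :=
    Real.rpow_le_rpow (hZnn π) (happrox σ) hp
  rw [Real.mul_rpow (by linarith : (0:ℝ) ≤ β) (hZnn σ)] at h1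
  have hEp : 0 < E ^ (1 / (α - 1)) := Real.rpow_pos_of_pos hE _
  rw [div_le_iff₀ hEp]
  calc (Z π) ^ (α / (α - 1)) ≤ β ^ (α / (α - 1)) * (Z σ) ^ (α / (α - 1)) := h1
    _ = β ^ (α / (α - 1)) * ((Z σ) ^ (α / (α - 1)) / E ^ (1 / (α - 1))) * E ^ (1 / (α - 1)) := by
        field_simp
end
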